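/- arXiv:1301.3931 — 3 statements merged into one kernel-verified Lean document; each statement's English description precedes it below -/
import Mathlib

section
/- Let Σ be a finite nonempty alphabet. If φ, ψ ∈ PMO(Σ), then the Hadamard product φ⊙ψ defined by (φ⊙ψ)(w) = φ(w)·ψ(w) belongs to PMO(Σ), and the f-complement φ^{f-c} defined by φ^{f-c}(w) = 1 − φ(w) belongs to PMO(Σ). -/
/-!
For the Hadamard product, run the two automata in parallel on `ℂ^m ⊗ ℂ^m'`, measuring the
observable `O_c ⊗ O'_c` at each letter. Its spectral projectors are the products `P_i ⊗ P'_j`,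
so the Lüders map `ρ ↦ ∑ P_j ρ P_j` commutes with `⊗`; hence the density matrix after `w` is
`σ(w) ⊗ σ'(w)`, and the trace of a tensor product is the product of the traces (both are real,
the density matrices being Hermitian).

For the f-complement, accept on the complementary set of outcomes of `O_#`: the Lüders map of a
complete measurement preserves the trace and `Tr σ(w) = 1`, so the two acceptance probabilities
add up to `1`.
-/

open Matrix

/-- A Measure-Only one-way quantum finite automaton (MOn-1qfa) over the alphabet `σ`
(the letter `none` plays the role of the end-marker `#`).  The data consists of:
the number of states `m`, for each letter `c` (and the end-marker) the number `k c`
of distinct eigenvalues of the observable `O_c`, the eigenvalues `eig c` themselves,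
the corresponding orthogonal projectors `P c`, the initial (row) vector `init`,
and the set `F` of (indices of) accepting eigenvalues of the end-marker observable. -/
structure MOnQFA (σ : Type) where
  m : ℕ
  k : Option σ → ℕ
  eig : (c : Option σ) → Fin (k c) → ℝ
  P : (c : Option σ) → Fin (k c) → Matrix (Fin m) (Fin m) ℂ
  init : Matrix (Fin 1) (Fin m) ℂ
  F : Finset (Fin (k none))

namespace MOnQFA

variable {σ : Type}

/-- Well-formedness of a MOn-1qfa: the eigenvalues of each observable are distinct,
the `P c j` are pairwise orthogonal Hermitian idempotents (orthogonal projectors)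
summing to the identity (so that `O_c = ∑ j, eig c j • P c j` is a Hermitian matrix
with spectral decomposition given by the data), and the initial vector has norm 1. -/
def Valid (A : MOnQFA σ) : Prop :=
  (∀ c, Function.Injective (A.eig c)) ∧
  (∀ c j, (A.P c j)ᴴ = A.P c j) ∧
  (∀ c j, A.P c j * A.P c j = A.P c j) ∧
  (∀ c j j', j ≠ j' → A.P c j * A.P c j' = 0) ∧
  (∀ c, ∑ j, A.P c j = 1) ∧
  (∑ i, Complex.normSq (A.init 0 i) = 1)

/-- The density matrix `σ(w)` reached after reading the word `w`:
`σ(ε) = π₀† π₀` and `σ(yc) = ∑ j, P_j(c) σ(y) P_j(c)`. -/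
noncomputable def dens (A : MOnQFA σ) (w : List σ) : Matrix (Fin A.m) (Fin A.m) ℂ :=
  w.foldl (fun ρ c => ∑ j, A.P (some c) j * ρ * A.P (some c) j) (A.initᴴ * A.init)

/-- The acceptance probability `p_A(w) = Tr (∑_{j ∈ F} P_j(#) σ(w) P_j(#))`. -/
noncomputable def prob (A : MOnQFA σ) (w : List σ) : ℝ :=
  (Matrix.trace (∑ j ∈ A.F, A.P none j * A.dens w * A.P none j)).re

end MOnQFA

/-- `LMO σ` : the class of languages recognized by some MOn-1qfa over `σ`
with an isolated cut-point. -/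
def LMO (σ : Type) : Set (Set (List σ)) :=
  {L | ∃ A : MOnQFA σ, A.Valid ∧ ∃ lam δ : ℝ, 0 < lam ∧ 0 < δ ∧
        (∀ w, |A.prob w - lam| ≥ δ) ∧ L = {w | A.prob w > lam}}

/-- `PMO σ` : the class of probabilistic events induced by MOn-1qfas over `σ`. -/
def PMO (σ : Type) : Set (List σ → ℝ) :=
  {φ | ∃ A : MOnQFA σ, A.Valid ∧ φ = A.prob}

open Kronecker Finset

section Lueders

variable {ι n R : Type*} [Fintype n]

def luders [Semiring R] (s : Finset ι) (P : ι → Matrix n n R) (ρ : Matrix n n R) :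
    Matrix n n R :=
  ∑ j ∈ s, P j * ρ * P j

lemma trace_luders_univ [Fintype ι] [DecidableEq n] [CommSemiring R] {P : ι → Matrix n n R}
    (hidem : ∀ j, P j * P j = P j) (hsum : ∑ j, P j = 1) (ρ : Matrix n n R) :
    (luders univ P ρ).trace = ρ.trace := by
  have hcycle : ∀ j, (P j * ρ * P j).trace = (P j * ρ).trace := fun j => by
    rw [trace_mul_comm, ← Matrix.mul_assoc, hidem]
  simp only [luders, trace_sum, hcycle]
  rw [← trace_sum, ← Finset.sum_mul, hsum, Matrix.one_mul]

lemma luders_add_luders_compl [Fintype ι] [DecidableEq ι] [Semiring R] (s : Finset ι)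
    (P : ι → Matrix n n R) (ρ : Matrix n n R) :
    luders s P ρ + luders sᶜ P ρ = luders univ P ρ :=
  sum_add_sum_compl s _

lemma Matrix.IsHermitian.luders [CommSemiring R] [StarRing R] {ρ : Matrix n n R}
    (hρ : ρ.IsHermitian) {P : ι → Matrix n n R} (hP : ∀ j, (P j).IsHermitian) (s : Finset ι) :
    (luders s P ρ).IsHermitian :=
  isSelfAdjoint_sum s fun j _ => show (P j * ρ * P j).IsHermitian by
    simpa only [(hP j).eq] using isHermitian_mul_mul_conjTranspose (P j) hρ

end Lueders

lemma Matrix.IsHermitian.im_trace {n : Type*} [Fintype n] {M : Matrix n n ℂ}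
    (hM : M.IsHermitian) : M.trace.im = 0 := by
  rw [← Complex.conj_eq_iff_im, ← Complex.star_def, ← trace_conjTranspose, hM.eq]

section KronFin

variable {R : Type*} [CommSemiring R] {a b c d e f : ℕ}

def kronFin (M : Matrix (Fin a) (Fin b) R) (N : Matrix (Fin c) (Fin d) R) :
    Matrix (Fin (a * c)) (Fin (b * d)) R :=
  reindex finProdFinEquiv finProdFinEquiv (M ⊗ₖ N)

lemma kronFin_mul (M : Matrix (Fin a) (Fin b) R) (N : Matrix (Fin c) (Fin d) R)
    (M' : Matrix (Fin b) (Fin e) R) (N' : Matrix (Fin d) (Fin f) R) :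
    kronFin M N * kronFin M' N' = kronFin (M * M') (N * N') := by
  simp only [kronFin, reindex_apply, submatrix_mul_equiv, mul_kronecker_mul]

lemma kronFin_conjTranspose [StarRing R] (M : Matrix (Fin a) (Fin b) R)
    (N : Matrix (Fin c) (Fin d) R) : (kronFin M N)ᴴ = kronFin Mᴴ Nᴴ := by
  simp only [kronFin, conjTranspose_reindex, conjTranspose_kronecker]

@[simp]
lemma kronFin_one : kronFin (1 : Matrix (Fin a) (Fin a) R) (1 : Matrix (Fin c) (Fin c) R) = 1 := by
  simp only [kronFin, one_kronecker_one, reindex_apply, submatrix_one_equiv]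

@[simp]
lemma kronFin_zero_left (N : Matrix (Fin c) (Fin d) R) :
    kronFin (0 : Matrix (Fin a) (Fin b) R) N = 0 := by
  simp [kronFin]

@[simp]
lemma kronFin_zero_right (M : Matrix (Fin a) (Fin b) R) :
    kronFin M (0 : Matrix (Fin c) (Fin d) R) = 0 := by
  simp [kronFin]

lemma trace_kronFin (M : Matrix (Fin a) (Fin a) R) (N : Matrix (Fin c) (Fin c) R) :
    (kronFin M N).trace = M.trace * N.trace := by
  rw [← trace_kronecker]
  exact finProdFinEquiv.symm.sum_comp fun p => (M ⊗ₖ N) p p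

lemma kronFin_sum_sum {ι κ : Type*} (s : Finset ι) (t : Finset κ)
    (M : ι → Matrix (Fin a) (Fin b) R) (N : κ → Matrix (Fin c) (Fin d) R) :
    kronFin (∑ i ∈ s, M i) (∑ k ∈ t, N k) = ∑ i ∈ s, ∑ k ∈ t, kronFin (M i) (N k) := by
  ext x y
  simp [kronFin, Matrix.sum_apply, Finset.sum_mul_sum]

end KronFin

section KronFamily

variable {R : Type*} [CommSemiring R] {a c k l : ℕ}
  (P : Fin k → Matrix (Fin a) (Fin a) R) (Q : Fin l → Matrix (Fin c) (Fin c) R)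

def kronFamily (j : Fin (k * l)) : Matrix (Fin (a * c)) (Fin (a * c)) R :=
  kronFin (P (finProdFinEquiv.symm j).1) (Q (finProdFinEquiv.symm j).2)

@[simp]
lemma kronFamily_finProdFinEquiv (i : Fin k) (j : Fin l) :
    kronFamily P Q (finProdFinEquiv (i, j)) = kronFin (P i) (Q j) := by
  simp [kronFamily]

lemma luders_kronFamily (s : Finset (Fin k)) (t : Finset (Fin l))
    (ρ : Matrix (Fin a) (Fin a) R) (τ : Matrix (Fin c) (Fin c) R) :
    luders ((s ×ˢ t).map finProdFinEquiv.toEmbedding) (kronFamily P Q) (kronFin ρ τ) =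
      kronFin (luders s P ρ) (luders t Q τ) := by
  simp only [luders, sum_map, Equiv.coe_toEmbedding, sum_product, kronFamily_finProdFinEquiv,
    kronFin_mul, kronFin_sum_sum]

lemma luders_univ_kronFamily (ρ : Matrix (Fin a) (Fin a) R) (τ : Matrix (Fin c) (Fin c) R) :
    luders univ (kronFamily P Q) (kronFin ρ τ) = kronFin (luders univ P ρ) (luders univ Q τ) := by
  rw [← luders_kronFamily, univ_product_univ, map_univ_equiv]

lemma sum_kronFamily : ∑ j, kronFamily P Q j = kronFin (∑ i, P i) (∑ j, Q j) := by
  rw [kronFin_sum_sum, ← Fintype.sum_prod_type', ← finProdFinEquiv.symm.sum_comp]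
  rfl

lemma kronFamily_mul_self (hP : ∀ i, P i * P i = P i) (hQ : ∀ j, Q j * Q j = Q j)
    (x : Fin (k * l)) : kronFamily P Q x * kronFamily P Q x = kronFamily P Q x := by
  rw [kronFamily, kronFin_mul, hP, hQ]

lemma isHermitian_kronFamily [StarRing R] (hP : ∀ i, (P i).IsHermitian)
    (hQ : ∀ j, (Q j).IsHermitian) (x : Fin (k * l)) : (kronFamily P Q x).IsHermitian := by
  rw [IsHermitian, kronFamily, kronFin_conjTranspose, hP, hQ]

lemma kronFamily_mul_of_ne (hP : ∀ i i', i ≠ i' → P i * P i' = 0)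
    (hQ : ∀ j j', j ≠ j' → Q j * Q j' = 0) {x y : Fin (k * l)} (hxy : x ≠ y) :
    kronFamily P Q x * kronFamily P Q y = 0 := by
  obtain ⟨⟨i, j⟩, rfl⟩ := finProdFinEquiv.surjective x
  obtain ⟨⟨i', j'⟩, rfl⟩ := finProdFinEquiv.surjective y
  rw [kronFamily_finProdFinEquiv, kronFamily_finProdFinEquiv, kronFin_mul]
  by_cases hi : i = i'
  · have hj : j ≠ j' := by rintro rfl; exact hxy (by rw [hi])
    rw [hQ j j' hj, kronFin_zero_right]
  · rw [hP i i' hi, kronFin_zero_left]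

end KronFamily

lemma trace_conjTranspose_mul_self_row {n : Type*} [Fintype n] (v : Matrix (Fin 1) n ℂ) :
    (vᴴ * v).trace = ∑ i, (Complex.normSq (v 0 i) : ℂ) := by
  refine sum_congr rfl fun i _ => ?_
  simp [Matrix.mul_apply, Complex.normSq_eq_conj_mul_self]

namespace MOnQFA

variable {σ : Type} {A B : MOnQFA σ}

lemma dens_concat (A : MOnQFA σ) (w : List σ) (c : σ) :
    A.dens (w ++ [c]) = luders univ (A.P (some c)) (A.dens w) :=
  List.foldl_concat ..

lemma prob_eq_re_trace (A : MOnQFA σ) (w : List σ) :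
    A.prob w = (luders A.F (A.P none) (A.dens w)).trace.re := rfl

lemma sum_normSq_init_eq_one_iff (A : MOnQFA σ) :
    ∑ i, Complex.normSq (A.init 0 i) = 1 ↔ (A.initᴴ * A.init).trace = 1 := by
  rw [trace_conjTranspose_mul_self_row]
  exact_mod_cast Iff.rfl

lemma Valid.trace_luders_univ (hA : A.Valid) (c : Option σ) (ρ : Matrix (Fin A.m) (Fin A.m) ℂ) :
    (luders univ (A.P c) ρ).trace = ρ.trace :=
  _root_.trace_luders_univ (hA.2.2.1 c) (hA.2.2.2.2.1 c) ρ

lemma Valid.trace_dens (hA : A.Valid) (w : List σ) : (A.dens w).trace = 1 := by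
  induction w using List.reverseRecOn with
  | nil => exact (sum_normSq_init_eq_one_iff A).1 hA.2.2.2.2.2
  | append_singleton w c ih => rw [dens_concat, hA.trace_luders_univ, ih]

lemma Valid.isHermitian_dens (hA : A.Valid) (w : List σ) : (A.dens w).IsHermitian := by
  induction w using List.reverseRecOn with
  | nil => exact isHermitian_conjTranspose_mul_self A.init
  | append_singleton w c ih => rw [dens_concat]; exact ih.luders (hA.2.1 _) univ

lemma Valid.im_trace_luders_dens (hA : A.Valid) (w : List σ) :
    (luders A.F (A.P none) (A.dens w)).trace.im = 0 :=
  ((hA.isHermitian_dens w).luders (hA.2.1 none) A.F).im_trace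

/-- Only the projectors matter for `prob`, so the eigenvalues of the product observable may be
any distinct labels; we use the outcome indices. -/
noncomputable abbrev tensor (A B : MOnQFA σ) : MOnQFA σ where
  m := A.m * B.m
  k c := A.k c * B.k c
  eig _ j := j
  P c := kronFamily (A.P c) (B.P c)
  init := kronFin A.init B.init
  F := (A.F ×ˢ B.F).map finProdFinEquiv.toEmbedding

lemma conjTranspose_mul_self_init_tensor (A B : MOnQFA σ) :
    (A.tensor B).initᴴ * (A.tensor B).init = kronFin (A.initᴴ * A.init) (B.initᴴ * B.init) := by
  rw [← kronFin_mul, ← kronFin_conjTranspose]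

lemma Valid.tensor (hA : A.Valid) (hB : B.Valid) : (A.tensor B).Valid := by
  obtain ⟨-, hAherm, hAidem, hAorth, hAsum, hAinit⟩ := hA
  obtain ⟨-, hBherm, hBidem, hBorth, hBsum, hBinit⟩ := hB
  refine ⟨fun _ => Nat.cast_injective.comp Fin.val_injective,
    fun c => isHermitian_kronFamily _ _ (hAherm c) (hBherm c),
    fun c => kronFamily_mul_self _ _ (hAidem c) (hBidem c),
    fun c _ _ => kronFamily_mul_of_ne _ _ (hAorth c) (hBorth c),
    fun c => (sum_kronFamily _ _).trans (by rw [hAsum, hBsum, kronFin_one]), ?_⟩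
  rw [sum_normSq_init_eq_one_iff] at hAinit hBinit ⊢
  rw [conjTranspose_mul_self_init_tensor, trace_kronFin, hAinit, hBinit, mul_one]

lemma dens_tensor (A B : MOnQFA σ) (w : List σ) :
    (A.tensor B).dens w = kronFin (A.dens w) (B.dens w) := by
  induction w using List.reverseRecOn with
  | nil => exact conjTranspose_mul_self_init_tensor A B
  | append_singleton w c ih =>
    rw [dens_concat, dens_concat, dens_concat, ih]
    exact luders_univ_kronFamily _ _ _ _

lemma prob_tensor (hA : A.Valid) (hB : B.Valid) (w : List σ) :
    (A.tensor B).prob w = A.prob w * B.prob w := by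
  have htrace : (luders (A.tensor B).F ((A.tensor B).P none) ((A.tensor B).dens w)).trace =
      (luders A.F (A.P none) (A.dens w)).trace * (luders B.F (B.P none) (B.dens w)).trace := by
    rw [dens_tensor]
    exact (congrArg trace (luders_kronFamily _ _ _ _ _ _)).trans (trace_kronFin _ _)
  rw [prob_eq_re_trace, htrace, Complex.mul_re, hA.im_trace_luders_dens, hB.im_trace_luders_dens,
    mul_zero, sub_zero, prob_eq_re_trace, prob_eq_re_trace]

def complAccept (A : MOnQFA σ) : MOnQFA σ := { A with F := A.Fᶜ }

lemma Valid.complAccept (hA : A.Valid) : A.complAccept.Valid := hA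

lemma prob_complAccept (hA : A.Valid) (w : List σ) : A.complAccept.prob w = 1 - A.prob w := by
  have hcompl : A.complAccept.prob w = (luders A.Fᶜ (A.P none) (A.dens w)).trace.re := rfl
  rw [hcompl, prob_eq_re_trace, eq_sub_iff_add_eq', ← Complex.add_re, ← trace_add,
    luders_add_luders_compl, hA.trace_luders_univ, hA.trace_dens, Complex.one_re]

end MOnQFA

theorem pmo_closed_hadamard_and_fcomplement_general
    (σ : Type) (φ ψ : List σ → ℝ)
    (hφ : φ ∈ PMO σ) (hψ : ψ ∈ PMO σ) :
    (fun w => φ w * ψ w) ∈ PMO σ ∧ (fun w => 1 - φ w) ∈ PMO σ := by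
  obtain ⟨A, hA, rfl⟩ := hφ
  obtain ⟨B, hB, rfl⟩ := hψ
  exact ⟨⟨A.tensor B, hA.tensor hB, funext fun w => (MOnQFA.prob_tensor hA hB w).symm⟩,
    ⟨A.complAccept, hA.complAccept, funext fun w => (MOnQFA.prob_complAccept hA w).symm⟩⟩

/-- The class `PMO(Σ)` of probabilistic events of MOn-1qfas over a
finite nonempty alphabet `Σ` is closed under Hadamard product
`(φ⊙ψ)(w) = φ(w)·ψ(w)` and under f-complement `φ^{f-c}(w) = 1 − φ(w)`. -/
theorem pmo_closed_hadamard_and_fcomplement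
    (σ : Type) [Fintype σ] [Nonempty σ] (φ ψ : List σ → ℝ)
    (hφ : φ ∈ PMO σ) (hψ : ψ ∈ PMO σ) :
    (fun w => φ w * ψ w) ∈ PMO σ ∧ (fun w => 1 - φ w) ∈ PMO σ :=
  pmo_closed_hadamard_and_fcomplement_general σ φ ψ hφ hψ
end

section
/- Let A and B be MOn-1qfas over Σ with m_A and m_B states, initial states π^A, π^B, observables O_c^A, O_c^B and accepting sets F^A, F^B, and let α, β be non-negative reals with α + β = 1. Assume for every c ∈ Σ∪{#} that the spectra of O_c^A and O_c^B are disjoint, so that the spectral projectors of the block-diagonal direct sum O_c^A ⊕ O_c^B are exactly the matrices P_j^A(c) ⊕ 0 and 0 ⊕ P_j^B(c). Let A⊕B be the MOn-1qfa with m_A + m_B states, initial state (√α·π^A) ⊕ (√β·π^B), observables O_c^A ⊕ O_c^B, and accepting set F^A ∪ F^B. Then p_{A⊕B}(x) = α·p_A(x) + β·p_B(x) for every x ∈ Σ*. -/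
open Matrix

namespace MOnQFA

/-- The convex linear combination (direct sum) `A ⊕ B` of two MOn-1qfas w.r.t.
weights `α, β`: the observables are the block-diagonal direct sums `O_c^A ⊕ O_c^B`
(whose spectral projectors, when the spectra of `O_c^A` and `O_c^B` are disjoint,
are exactly `P_j^A(c) ⊕ 0` and `0 ⊕ P_j^B(c)`), the initial state is
`(√α·π^A) ⊕ (√β·π^B)`, and the accepting set is `F^A ∪ F^B`. -/
noncomputable def dsum {σ : Type} (A B : MOnQFA σ) (α β : ℝ) : MOnQFA σ where
  m := A.m + B.m
  k := fun c => A.k c + B.k c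
  eig := fun c => Fin.addCases (A.eig c) (B.eig c)
  P := fun c =>
    Fin.addCases
      (fun j => (Matrix.fromBlocks (A.P c j) 0 0 0).submatrix
          finSumFinEquiv.symm finSumFinEquiv.symm)
      (fun j => (Matrix.fromBlocks 0 0 0 (B.P c j)).submatrix
          finSumFinEquiv.symm finSumFinEquiv.symm)
  init := Matrix.of fun r i =>
    Sum.elim (fun i₁ => (Real.sqrt α : ℂ) * A.init r i₁)
      (fun i₂ => (Real.sqrt β : ℂ) * B.init r i₂) (finSumFinEquiv.symm i)
  F := A.F.map (Fin.castAddEmb (B.k none)) ∪ B.F.map (Fin.natAddEmb (A.k none))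

end MOnQFA

/-!
Identify the states of `A ⊕ B` with `Fin m_A ⊕ Fin m_B`. Every projector of `A ⊕ B` lives in a
single diagonal block, so the measurement `ρ ↦ ∑ P ρ P` annihilates the off-diagonal blocks of
`ρ` and acts on the two diagonal blocks as the measurements of `A` and `B`. The initial density
matrix has diagonal blocks `α σ_A(ε)` and `β σ_B(ε)`, so by induction `σ_{A⊕B}(w)` has diagonal
blocks `α σ_A(w)` and `β σ_B(w)`, and the trace of the final measurement splits accordingly.
-/

theorem Fin.disjoint_map_castAddEmb_map_natAddEmb {a b : ℕ} (s : Finset (Fin a))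
    (t : Finset (Fin b)) : Disjoint (s.map (castAddEmb b)) (t.map (natAddEmb a)) := by
  simp only [Finset.disjoint_left, Finset.mem_map, Fin.coe_castAddEmb, Fin.ext_iff,
    Fin.val_castAdd, Fin.natAddEmb_apply, Fin.val_natAdd, not_exists, not_and,
    forall_exists_index, and_imp]
  omega

theorem Fin.univ_add_eq_map_castAddEmb_union_map_natAddEmb (a b : ℕ) :
    (Finset.univ : Finset (Fin (a + b))) =
      Finset.univ.map (castAddEmb b) ∪ Finset.univ.map (natAddEmb a) := by
  ext i
  refine Fin.addCases (fun i => ?_) (fun i => ?_) i <;> simp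

namespace Matrix

section Blocks

variable {m n R : Type*} [Fintype m] [Fintype n]

theorem trace_reindex [AddCommMonoid R] {l : Type*} [Fintype l] (e : m ≃ l) (M : Matrix m m R) :
    trace (reindex e e M) = trace M :=
  e.symm.sum_comp M.diag

theorem trace_fromBlocks [AddCommMonoid R] (M₁₁ : Matrix m m R) (M₁₂ : Matrix m n R)
    (M₂₁ : Matrix n m R) (M₂₂ : Matrix n n R) :
    trace (fromBlocks M₁₁ M₁₂ M₂₁ M₂₂) = trace M₁₁ + trace M₂₂ :=
  Fintype.sum_sum_type _

end Blocks

section Lueders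

variable {ι κ m n R : Type*} [Fintype m] [Fintype n] [Semiring R]

/-- Lüders' (unnormalised) state update for the measurement outcomes in `s`. -/
def lueders (P : ι → Matrix n n R) (s : Finset ι) (ρ : Matrix n n R) : Matrix n n R :=
  ∑ j ∈ s, P j * ρ * P j

theorem lueders_union [DecidableEq ι] (P : ι → Matrix n n R) {s t : Finset ι}
    (h : Disjoint s t) (ρ : Matrix n n R) :
    lueders P (s ∪ t) ρ = lueders P s ρ + lueders P t ρ :=
  Finset.sum_union h

theorem lueders_map (P : ι → Matrix n n R) (s : Finset κ) (f : κ ↪ ι) (ρ : Matrix n n R) :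
    lueders P (s.map f) ρ = lueders (P ∘ f) s ρ :=
  Finset.sum_map s f _

theorem lueders_smul {S : Type*} [Monoid S] [DistribMulAction S R] [IsScalarTower S R R]
    [SMulCommClass S R R] (P : ι → Matrix n n R) (s : Finset ι) (a : S) (ρ : Matrix n n R) :
    lueders P s (a • ρ) = a • lueders P s ρ := by
  simp only [lueders, Finset.smul_sum, Matrix.mul_smul, Matrix.smul_mul]

theorem map_lueders {F S : Type*} [Semiring S] [FunLike F (Matrix n n R) (Matrix m m S)]
    [NonUnitalRingHomClass F (Matrix n n R) (Matrix m m S)] (f : F) (P : ι → Matrix n n R)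
    (s : Finset ι) (ρ : Matrix n n R) :
    f (lueders P s ρ) = lueders (fun j => f (P j)) s (f ρ) := by
  simp only [lueders, map_sum, map_mul]

theorem lueders_fromBlocks_left (P : ι → Matrix m m R) (s : Finset ι) (ρ₁₁ : Matrix m m R)
    (ρ₁₂ : Matrix m n R) (ρ₂₁ : Matrix n m R) (ρ₂₂ : Matrix n n R) :
    lueders (fun j => fromBlocks (P j) 0 0 0) s (fromBlocks ρ₁₁ ρ₁₂ ρ₂₁ ρ₂₂) =
      fromBlocks (lueders P s ρ₁₁) 0 0 0 := by
  ext (i | i) (k | k) <;> simp [lueders, sum_apply, fromBlocks_multiply]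

theorem lueders_fromBlocks_right (Q : κ → Matrix n n R) (t : Finset κ) (ρ₁₁ : Matrix m m R)
    (ρ₁₂ : Matrix m n R) (ρ₂₁ : Matrix n m R) (ρ₂₂ : Matrix n n R) :
    lueders (fun j => fromBlocks 0 0 0 (Q j)) t (fromBlocks ρ₁₁ ρ₁₂ ρ₂₁ ρ₂₂) =
      fromBlocks 0 0 0 (lueders Q t ρ₂₂) := by
  ext (i | i) (k | k) <;> simp [lueders, sum_apply, fromBlocks_multiply]

end Lueders

theorem lueders_addCases_reindex_fromBlocks {R l m n : Type*} [Semiring R] [Fintype l]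
    [Fintype m] [Fintype n] [DecidableEq l] [DecidableEq m] [DecidableEq n] {a b : ℕ}
    (e : m ⊕ n ≃ l) (P : Fin a → Matrix m m R) (Q : Fin b → Matrix n n R)
    (s : Finset (Fin a)) (t : Finset (Fin b)) (ρ₁₁ : Matrix m m R) (ρ₁₂ : Matrix m n R)
    (ρ₂₁ : Matrix n m R) (ρ₂₂ : Matrix n n R) :
    lueders (Fin.addCases (fun j => reindex e e (fromBlocks (P j) 0 0 0))
        (fun j => reindex e e (fromBlocks 0 0 0 (Q j))))
        (s.map (Fin.castAddEmb b) ∪ t.map (Fin.natAddEmb a))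
        (reindex e e (fromBlocks ρ₁₁ ρ₁₂ ρ₂₁ ρ₂₂)) =
      reindex e e (fromBlocks (lueders P s ρ₁₁) 0 0 (lueders Q t ρ₂₂)) := by
  rw [lueders_union _ (Fin.disjoint_map_castAddEmb_map_natAddEmb s t), lueders_map, lueders_map]
  simp only [Function.comp_def, Fin.coe_castAddEmb, Fin.addCases_left, Fin.natAddEmb_apply,
    Fin.addCases_right]
  rw [← coe_reindexRingEquiv R e, ← map_lueders, ← map_lueders, lueders_fromBlocks_left,
    lueders_fromBlocks_right, ← map_add, fromBlocks_add]
  simp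

end Matrix

namespace MOnQFA

variable {σ : Type} (A B : MOnQFA σ) (α β : ℝ)

theorem dens_append_singleton (w : List σ) (c : σ) :
    A.dens (w ++ [c]) = lueders (A.P (some c)) Finset.univ (A.dens w) := by
  rw [dens, List.foldl_append]
  rfl

theorem prob_eq_re_trace_lueders (w : List σ) :
    A.prob w = (trace (lueders (A.P none) A.F (A.dens w))).re :=
  rfl

/-- `(A.dsum B α β).m` is `A.m + B.m` only up to unfolding `dsum`; reindexing onto the former
type keeps the lemmas below usable by `rw` on goals about `A.dsum B α β`. -/
def dsumEquiv : Fin A.m ⊕ Fin B.m ≃ Fin (A.dsum B α β).m :=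
  finSumFinEquiv

local notation "Φ" => reindex (A.dsumEquiv B α β) (A.dsumEquiv B α β)

theorem lueders_F_dsum
    (ρ₁₁ : Matrix (Fin A.m) (Fin A.m) ℂ) (ρ₁₂ : Matrix (Fin A.m) (Fin B.m) ℂ)
    (ρ₂₁ : Matrix (Fin B.m) (Fin A.m) ℂ) (ρ₂₂ : Matrix (Fin B.m) (Fin B.m) ℂ) :
    lueders ((A.dsum B α β).P none) (A.dsum B α β).F (Φ (fromBlocks ρ₁₁ ρ₁₂ ρ₂₁ ρ₂₂)) =
      Φ (fromBlocks (lueders (A.P none) A.F ρ₁₁) 0 0 (lueders (B.P none) B.F ρ₂₂)) :=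
  lueders_addCases_reindex_fromBlocks _ _ _ _ _ _ _ _ _

theorem lueders_univ_dsum (c : Option σ)
    (ρ₁₁ : Matrix (Fin A.m) (Fin A.m) ℂ) (ρ₁₂ : Matrix (Fin A.m) (Fin B.m) ℂ)
    (ρ₂₁ : Matrix (Fin B.m) (Fin A.m) ℂ) (ρ₂₂ : Matrix (Fin B.m) (Fin B.m) ℂ) :
    lueders ((A.dsum B α β).P c) Finset.univ (Φ (fromBlocks ρ₁₁ ρ₁₂ ρ₂₁ ρ₂₂)) =
      Φ (fromBlocks (lueders (A.P c) Finset.univ ρ₁₁) 0 0 (lueders (B.P c) Finset.univ ρ₂₂)) := by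
  have h := lueders_addCases_reindex_fromBlocks (A.dsumEquiv B α β) (A.P c) (B.P c)
    Finset.univ Finset.univ ρ₁₁ ρ₁₂ ρ₂₁ ρ₂₂
  rw [← Fin.univ_add_eq_map_castAddEmb_union_map_natAddEmb] at h
  exact h

theorem dsum_init :
    (A.dsum B α β).init =
      (fromCols (√α • A.init) (√β • B.init)).submatrix id (A.dsumEquiv B α β).symm := by
  ext r i
  change Sum.elim _ _ (finSumFinEquiv.symm i) = fromCols _ _ r (finSumFinEquiv.symm i)
  rcases finSumFinEquiv.symm i with i | i <;> simp [Complex.real_smul]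

theorem conjTranspose_init_mul_init_dsum (hα : 0 ≤ α) (hβ : 0 ≤ β) :
    (A.dsum B α β).initᴴ * (A.dsum B α β).init =
      Φ (fromBlocks (α • (A.initᴴ * A.init)) ((√β * √α) • (A.initᴴ * B.init))
        ((√α * √β) • (B.initᴴ * A.init)) (β • (B.initᴴ * B.init))) := by
  rw [dsum_init, conjTranspose_submatrix, ← submatrix_mul _ _ _ _ _ Function.bijective_id,
    conjTranspose_fromCols_eq_fromRows_conjTranspose, fromRows_mul_fromCols]
  simp only [conjTranspose_smul, star_trivial, Matrix.smul_mul, Matrix.mul_smul, smul_smul,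
    Real.mul_self_sqrt hα, Real.mul_self_sqrt hβ]
  rfl

/-- The off-diagonal blocks start as the coherences `√(αβ) π_A† π_B` of the initial state;
the first measurement erases them. -/
theorem dens_dsum (hα : 0 ≤ α) (hβ : 0 ≤ β) (x : List σ) :
    ∃ C D, (A.dsum B α β).dens x = Φ (fromBlocks (α • A.dens x) C D (β • B.dens x)) := by
  induction x using List.reverseRecOn with
  | nil => exact ⟨_, _, conjTranspose_init_mul_init_dsum A B α β hα hβ⟩
  | append_singleton y c ih =>
    obtain ⟨C, D, h⟩ := ih
    refine ⟨0, 0, ?_⟩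
    rw [dens_append_singleton, dens_append_singleton, dens_append_singleton, h,
      lueders_univ_dsum, lueders_smul, lueders_smul]

end MOnQFA

theorem prob_dsum_general
    (σ : Type) (A B : MOnQFA σ)
    (α β : ℝ) (hα : 0 ≤ α) (hβ : 0 ≤ β) :
    ∀ x : List σ, (A.dsum B α β).prob x = α * A.prob x + β * B.prob x := by
  intro x
  obtain ⟨C, D, h⟩ := A.dens_dsum B α β hα hβ x
  rw [MOnQFA.prob_eq_re_trace_lueders, h, MOnQFA.lueders_F_dsum, lueders_smul, lueders_smul,
    trace_reindex, trace_fromBlocks, trace_smul, trace_smul]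
  simp only [MOnQFA.prob_eq_re_trace_lueders, Complex.add_re, Complex.smul_re, smul_eq_mul]

/-- Let `A`, `B` be MOn-1qfas over `Σ` and `α, β ≥ 0` with
`α + β = 1`.  Assume that for every `c ∈ Σ ∪ {#}` the spectra of `O_c^A` and `O_c^B`
are disjoint.  Then the convex linear combination `A ⊕ B` (with initial state
`(√α·π^A) ⊕ (√β·π^B)`, observables `O_c^A ⊕ O_c^B` and accepting set `F^A ∪ F^B`)
satisfies `p_{A⊕B}(x) = α·p_A(x) + β·p_B(x)` for every word `x`. -/
theorem prob_dsum
    (σ : Type) [Fintype σ] [Nonempty σ] (A B : MOnQFA σ) (hA : A.Valid) (hB : B.Valid)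
    (α β : ℝ) (hα : 0 ≤ α) (hβ : 0 ≤ β) (hαβ : α + β = 1)
    (hdisj : ∀ (c : Option σ) (j₁ : Fin (A.k c)) (j₂ : Fin (B.k c)),
      A.eig c j₁ ≠ B.eig c j₂) :
    ∀ x : List σ, (A.dsum B α β).prob x = α * A.prob x + β * B.prob x :=
  prob_dsum_general σ A B α β hα hβ
end

section
/- Let L ⊆ Σ* be a regular language and let Q be the set of Nerode equivalence classes of Σ* with respect to L (the states of the minimal deterministic automaton of L, with [u]·a := [ua]). Then L has finite variation if and only if there exists a total order ≤ on Q such that [ua] ≥ [u] for every u ∈ Σ* and every a ∈ Σ. -/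
/-- Two words are Nerode-equivalent w.r.t. `L` (they reach the same state of the
minimal automaton of `L`) if they have the same residuals:
`∀ z, u z ∈ L ↔ u' z ∈ L`. -/
def NerodeEquiv {σ : Type} (L : Set (List σ)) (u u' : List σ) : Prop :=
  ∀ z : List σ, u ++ z ∈ L ↔ u' ++ z ∈ L

/-- The variation `var_L(w)` of a word `w = w₁⋯w_n`: the number of indices
`0 ≤ k < n` such that the prefixes `w₁⋯w_k` and `w₁⋯w_{k+1}` are not
Nerode-equivalent. -/
noncomputable def variation {σ : Type} (L : Set (List σ)) (w : List σ) : ℕ :=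
  Nat.card {k : ℕ // k < w.length ∧ ¬ NerodeEquiv L (w.take k) (w.take (k + 1))}

/-- A language has finite variation if `sup_{w} var_L(w) < ∞`. -/
def FiniteVariation {σ : Type} (L : Set (List σ)) : Prop :=
  ∃ B : ℕ, ∀ w : List σ, variation L w ≤ B

/-- The Nerode setoid of `L`: words are identified when they are Nerode-equivalent. -/
def nerodeSetoid {σ : Type} (L : Set (List σ)) : Setoid (List σ) where
  r := NerodeEquiv L
  iseqv :=
    ⟨fun _ _ => Iff.rfl, fun h z => (h z).symm, fun h₁ h₂ z => (h₁ z).trans (h₂ z)⟩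

/-- The states of the minimal deterministic automaton of `L`: the Nerode
equivalence classes of words. -/
def NerodeClasses {σ : Type} (L : Set (List σ)) : Type :=
  Quotient (nerodeSetoid L)

/-!
Order the states of the minimal automaton by reachability: `p ≤ q` when `q = p · z` for some
word `z`. This is always a preorder, and finite variation makes it antisymmetric: if
`[u (z z')] = [u]` but `[u] ≠ [u z]`, then reading `(z z')ⁿ` from `u` leaves the current state at
least once per round, so `var_L (u (z z')ⁿ) ≥ n`. Any linear extension of this partial order is
then compatible with the letters.

Conversely, for a compatible linear order the states along the prefixes of `w` increase weakly,
so after each change of state the new state is strictly above all earlier ones; hence the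
variation of `w` is at most the number of states, which is finite by Myhill–Nerode.
-/

theorem Nat.injOn_succ_of_forall_rel_succ {β : Type*} (r : β → β → Prop) [IsPartialOrder β r]
    {f : ℕ → β} (h : ∀ n, r (f n) (f (n + 1))) :
    {k | f k ≠ f (k + 1)}.InjOn fun k => f (k + 1) := by
  have key : ∀ k l, k < l → f l ≠ f (l + 1) → f (k + 1) ≠ f (l + 1) := fun k l hkl hl heq =>
    hl (antisymm (h l) (heq ▸ Nat.rel_of_forall_rel_succ_of_le r h hkl))
  intro k hk l hl heq
  by_contra hne
  rcases Nat.lt_or_gt_of_ne hne with hkl | hlk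
  · exact key k l hkl hl heq
  · exact key l k hlk hk heq.symm

namespace NerodeEquiv

variable {σ : Type} {L : Set (List σ)} {u v : List σ}

protected theorem refl (u : List σ) : NerodeEquiv L u u :=
  fun _ => Iff.rfl

protected theorem symm (h : NerodeEquiv L u v) : NerodeEquiv L v u :=
  fun z => (h z).symm

protected theorem trans {w : List σ} (h : NerodeEquiv L u v) (h' : NerodeEquiv L v w) :
    NerodeEquiv L u w :=
  fun z => (h z).trans (h' z)

theorem append_right (h : NerodeEquiv L u v) (z : List σ) : NerodeEquiv L (u ++ z) (v ++ z) :=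
  fun z' => by simpa only [List.append_assoc] using h (z ++ z')

theorem append_append_iff {x x' : List σ} (h : NerodeEquiv L x x') :
    NerodeEquiv L (x ++ u) (x ++ v) ↔ NerodeEquiv L (x' ++ u) (x' ++ v) := by
  constructor <;> intro h'
  · exact ((h.append_right u).symm.trans h').trans (h.append_right v)
  · exact ((h.append_right u).trans h').trans (h.append_right v).symm

end NerodeEquiv

theorem nerodeEquiv_iff_leftQuotient_eq {σ : Type} {L : Set (List σ)} {u v : List σ} :
    NerodeEquiv L u v ↔ Language.leftQuotient L u = Language.leftQuotient L v :=
  Set.ext_iff.symm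


namespace NerodeClasses

variable {σ : Type} {L : Set (List σ)}

theorem finite_of_isRegular (hL : Language.IsRegular L) : Finite (NerodeClasses L) :=
  have := hL.finite_range_leftQuotient.to_subtype
  Finite.of_injective
    (Quotient.lift (s := nerodeSetoid L)
      (fun u => (⟨_, u, rfl⟩ : Set.range (Language.leftQuotient L)))
      fun _ _ h => Subtype.ext (nerodeEquiv_iff_leftQuotient_eq.mp h))
    (by
      rintro ⟨u⟩ ⟨v⟩ h
      exact Quotient.sound (nerodeEquiv_iff_leftQuotient_eq.mpr (congrArg Subtype.val h)))

@[elab_as_elim]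
theorem ind {motive : NerodeClasses L → Prop}
    (mk : ∀ u, motive (Quotient.mk (nerodeSetoid L) u)) (q : NerodeClasses L) : motive q :=
  Quotient.ind mk q

def append (q : NerodeClasses L) (z : List σ) : NerodeClasses L :=
  Quotient.map (sa := nerodeSetoid L) (sb := nerodeSetoid L) (· ++ z)
    (fun _ _ h => NerodeEquiv.append_right h z) q

theorem append_append (q : NerodeClasses L) (z z' : List σ) :
    (q.append z).append z' = q.append (z ++ z') := by
  induction q using NerodeClasses.ind with
  | mk u => exact congrArg _ (List.append_assoc u z z')

def Reaches (p q : NerodeClasses L) : Prop :=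
  ∃ z, q = p.append z

end NerodeClasses

section Variation

variable {σ : Type} {L : Set (List σ)}

open Finset

open scoped Classical in
noncomputable def variationFrom (L : Set (List σ)) (x y : List σ) : ℕ :=
  #{k ∈ range y.length | ¬ NerodeEquiv L (x ++ y.take k) (x ++ y.take (k + 1))}

theorem variation_eq_variationFrom_nil (w : List σ) : variation L w = variationFrom L [] w := by
  rw [variation, variationFrom, ← Nat.card_eq_finsetCard]
  exact Nat.card_congr (Equiv.subtypeEquivRight fun k => by simp)

theorem variationFrom_append (x y y' : List σ) :
    variationFrom L x (y ++ y') = variationFrom L x y + variationFrom L (x ++ y) y' := by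
  simp only [variationFrom, card_filter, List.length_append, sum_range_add]
  congr 1
  · refine sum_congr rfl fun k hk => ?_
    have hk : k + 1 ≤ y.length := mem_range.mp hk
    rw [List.take_append_of_le_length hk, List.take_append_of_le_length (by omega)]
  · refine sum_congr rfl fun k _ => ?_
    rw [add_assoc, List.take_length_add_append, List.take_length_add_append, ← List.append_assoc,
      ← List.append_assoc]

theorem variationFrom_congr {x x' : List σ} (h : NerodeEquiv L x x') (y : List σ) :
    variationFrom L x y = variationFrom L x' y := by
  rw [variationFrom, variationFrom]
  congr 1
  ext k
  simp only [mem_filter, h.append_append_iff]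

theorem variationFrom_singleton_eq_zero_iff (x : List σ) (a : σ) :
    variationFrom L x [a] = 0 ↔ NerodeEquiv L x (x ++ [a]) := by
  classical
  rw [variationFrom, card_eq_zero, filter_eq_empty_iff]
  simp

theorem nerodeEquiv_append_of_variationFrom_eq_zero {x y : List σ} (h : variationFrom L x y = 0) :
    NerodeEquiv L x (x ++ y) := by
  induction y using List.reverseRecOn with
  | nil => simpa using NerodeEquiv.refl x
  | append_singleton y a ih =>
    rw [variationFrom_append, Nat.add_eq_zero_iff, variationFrom_singleton_eq_zero_iff] at h
    rw [← List.append_assoc]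
    exact (ih h.1).trans h.2

theorem variation_append (x y : List σ) :
    variation L (x ++ y) = variation L x + variationFrom L x y := by
  simp only [variation_eq_variationFrom_nil, variationFrom_append, List.nil_append]

theorem variationFrom_flatten_replicate {x p : List σ} (h : NerodeEquiv L (x ++ p) x) (n : ℕ) :
    variationFrom L x (List.replicate n p).flatten = n * variationFrom L x p := by
  induction n with
  | zero => simp [variationFrom]
  | succ n ih =>
    rw [List.replicate_succ, List.flatten_cons, variationFrom_append, variationFrom_congr h, ih]
    ring

end Variation

namespace FiniteVariation

variable {σ : Type} {L : Set (List σ)}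

theorem nerodeEquiv_of_loop (hL : FiniteVariation L) {x z z' : List σ}
    (hloop : NerodeEquiv L (x ++ (z ++ z')) x) : NerodeEquiv L x (x ++ z) := by
  obtain ⟨B, hB⟩ := hL
  by_contra hne
  have hpos : 0 < variationFrom L x (z ++ z') := by
    rw [variationFrom_append]
    exact Nat.add_pos_left (Nat.pos_of_ne_zero
      (mt nerodeEquiv_append_of_variationFrom_eq_zero hne)) _
  have := hB (x ++ (List.replicate (B + 1) (z ++ z')).flatten)
  rw [variation_append, variationFrom_flatten_replicate hloop] at this
  have := Nat.le_mul_of_pos_right (B + 1) hpos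
  omega

theorem isPartialOrder_reaches (hL : FiniteVariation L) :
    IsPartialOrder (NerodeClasses L) NerodeClasses.Reaches where
  refl q := ⟨[], by
    induction q using NerodeClasses.ind with
    | mk u => exact congrArg _ (List.append_nil u).symm⟩
  trans := by
    rintro p q r ⟨z, rfl⟩ ⟨z', rfl⟩
    exact ⟨z ++ z', NerodeClasses.append_append p z z'⟩
  antisymm := by
    rintro p q ⟨z, rfl⟩ ⟨z', hp⟩
    induction p using NerodeClasses.ind with
    | mk u =>
      have hloop : NerodeEquiv L (u ++ (z ++ z')) u :=
        Quotient.exact ((NerodeClasses.append_append _ z z').symm.trans hp.symm)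
      exact Quotient.sound (hL.nerodeEquiv_of_loop hloop)

end FiniteVariation

theorem variation_le_natCard_of_rel_append_singleton {σ : Type} {L : Set (List σ)}
    [Finite (NerodeClasses L)] (r : NerodeClasses L → NerodeClasses L → Prop)
    [IsPartialOrder (NerodeClasses L) r]
    (hr : ∀ (u : List σ) (a : σ),
      r (Quotient.mk (nerodeSetoid L) u) (Quotient.mk (nerodeSetoid L) (u ++ [a])))
    (w : List σ) : variation L w ≤ Nat.card (NerodeClasses L) := by
  set f : ℕ → NerodeClasses L := fun k => Quotient.mk (nerodeSetoid L) (w.take k)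
  have hf : ∀ n, r (f n) (f (n + 1)) := by
    intro n
    rcases Nat.lt_or_ge n w.length with hn | hn
    · simp only [f, List.take_succ_eq_append_getElem hn]
      exact hr _ _
    · simp only [f, List.take_of_length_le hn, List.take_of_length_le (Nat.le_succ_of_le hn)]
      exact refl_of r _
  refine Nat.card_le_card_of_injective (fun k => f (k.1 + 1)) fun k l hkl => Subtype.ext ?_
  exact Nat.injOn_succ_of_forall_rel_succ r hf (fun h => k.2.2 (Quotient.exact h))
    (fun h => l.2.2 (Quotient.exact h)) hkl

theorem finiteVariation_iff_exists_compatible_linear_order_general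
    (σ : Type) (L : Set (List σ))
    (hreg : ∃ (Q : Type) (_ : Fintype Q) (M : DFA σ Q), ∀ w, w ∈ M.accepts ↔ w ∈ L) :
    FiniteVariation L ↔
      ∃ le : NerodeClasses L → NerodeClasses L → Prop,
        IsLinearOrder (NerodeClasses L) le ∧
        ∀ (u : List σ) (a : σ),
          le (Quotient.mk (nerodeSetoid L) u) (Quotient.mk (nerodeSetoid L) (u ++ [a])) := by
  constructor
  · intro hL
    have := hL.isPartialOrder_reaches
    obtain ⟨le, hlin, hreaches_le⟩ := extend_partialOrder (NerodeClasses.Reaches (L := L))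
    exact ⟨le, hlin, fun u a => hreaches_le _ _ ⟨[a], rfl⟩⟩
  · rintro ⟨le, hlin, hle⟩
    obtain ⟨Q, _, M, hM⟩ := hreg
    have := NerodeClasses.finite_of_isRegular ⟨Q, inferInstance, M, Set.ext hM⟩
    exact ⟨_, variation_le_natCard_of_rel_append_singleton le hle⟩

/-- A regular language `L ⊆ Σ*` has finite variation if and only if
there is a total order `≤` on the set `Q` of Nerode classes (the states of the
minimal automaton of `L`, with `[u]·a = [ua]`) such that `[ua] ≥ [u]` for every word
`u` and letter `a`. -/
theorem finiteVariation_iff_exists_compatible_linear_order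
    (σ : Type) [Fintype σ] [Nonempty σ] (L : Set (List σ))
    (hreg : ∃ (Q : Type) (_ : Fintype Q) (M : DFA σ Q), ∀ w, w ∈ M.accepts ↔ w ∈ L) :
    FiniteVariation L ↔
      ∃ le : NerodeClasses L → NerodeClasses L → Prop,
        IsLinearOrder (NerodeClasses L) le ∧
        ∀ (u : List σ) (a : σ),
          le (Quotient.mk (nerodeSetoid L) u) (Quotient.mk (nerodeSetoid L) (u ++ [a])) :=
  finiteVariation_iff_exists_compatible_linear_order_general σ L hreg
end
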